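/- In the setting of Proposition 2 (near-exact positive formula with residual ε, ε√M < 1), for every polynomial p of degree ≤ n: ‖p‖_{ℓ²(X)} ≤ √M · β_M(ε) · max_{t ∈ T_{2n}} |p(t)|, where β_M(ε) = (1 − ε√M)^{−1/2} (1 + ε/√M)^{1/2}. -/

import Mathlib

/-!
Write a polynomial `q` of degree `≤ 2n` on `X` as `q = ∑ₖ cₖ ψₖ`. Then `‖q‖_{ℓ²(X)} = ‖c‖` and the
quadrature error `∑ᵢ uᵢ q(xᵢ) - ∑ᵢ q(xᵢ)` is `⟨c, r⟩`, where `r` is the moment residual, so by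
Cauchy–Schwarz it is at most `ε ‖q‖_{ℓ²(X)}`. For `q = 1` this bounds the total weight by
`M + ε√M`; for `q = p²`, using `‖p²‖_{ℓ²} ≤ ‖p‖²_{ℓ²}`, it gives
`(1 - ε) ‖p‖²_{ℓ²} ≤ ∑ᵢ uᵢ p(xᵢ)² ≤ A² ∑ᵢ uᵢ`, and `ε ≤ ε√M` turns this into the claim.
-/

open MvPolynomial

theorem abs_sum_mul_le_sqrt_mul_sqrt {ι : Type*} (s : Finset ι) (f g : ι → ℝ) :
    |∑ i ∈ s, f i * g i| ≤ √(∑ i ∈ s, f i ^ 2) * √(∑ i ∈ s, g i ^ 2) := by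
  calc |∑ i ∈ s, f i * g i| ≤ ∑ i ∈ s, |f i| * |g i| := by
        simpa only [abs_mul] using Finset.abs_sum_le_sum_abs (fun i => f i * g i) s
    _ ≤ _ := by simpa only [sq_abs] using Real.sum_mul_le_sqrt_mul_sqrt s (|f ·|) (|g ·|)

theorem sqrt_sum_sq_sq_le_sum_sq {ι : Type*} (s : Finset ι) (f : ι → ℝ) :
    √(∑ i ∈ s, (f i ^ 2) ^ 2) ≤ ∑ i ∈ s, f i ^ 2 :=
  (Real.sqrt_le_left (Finset.sum_nonneg fun i _ => sq_nonneg (f i))).mpr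
    (Finset.sum_sq_le_sq_sum_of_nonneg fun i _ => sq_nonneg (f i))

theorem sum_mul_sq_le_sq_mul_sum {ι : Type*} (s : Finset ι) {u f : ι → ℝ} {A : ℝ}
    (hu : ∀ i, 0 ≤ u i) (hf : ∀ i, u i ≠ 0 → |f i| ≤ A) :
    ∑ i ∈ s, u i * f i ^ 2 ≤ A ^ 2 * ∑ i ∈ s, u i := by
  rw [Finset.mul_sum]
  refine Finset.sum_le_sum fun i _ => ?_
  rcases eq_or_ne (u i) 0 with hui | hui
  · simp [hui]
  · rw [mul_comm, ← sq_abs]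
    exact mul_le_mul_of_nonneg_right (pow_le_pow_left₀ (abs_nonneg _) (hf i hui) 2) (hu i)

section Orthonormal

variable {ι κ : Type*} [Fintype ι] [Fintype κ]

theorem sum_sq_sum_mul_eq_sum_sq_of_orthonormal [DecidableEq κ] {ψ : κ → ι → ℝ}
    (horth : ∀ j k, ∑ i, ψ j i * ψ k i = if j = k then 1 else 0) (c : κ → ℝ) :
    ∑ i, (∑ k, c k * ψ k i) ^ 2 = ∑ k, c k ^ 2 := by
  calc ∑ i, (∑ k, c k * ψ k i) ^ 2
      = ∑ j, ∑ k, c j * c k * ∑ i, ψ j i * ψ k i := by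
        simp_rw [sq, Finset.sum_mul_sum, Finset.mul_sum]
        rw [Finset.sum_comm]
        refine Finset.sum_congr rfl fun j _ => ?_
        rw [Finset.sum_comm]
        exact Finset.sum_congr rfl fun k _ => Finset.sum_congr rfl fun i _ => by ring
    _ = ∑ k, c k ^ 2 := by simp [horth, sq]

theorem sum_mul_sub_sum_eq_sum_mul_residual (ψ : κ → ι → ℝ) (u : ι → ℝ) (c : κ → ℝ) :
    ∑ i, u i * ∑ k, c k * ψ k i - ∑ i, ∑ k, c k * ψ k i
      = ∑ k, c k * (∑ i, u i * ψ k i - ∑ i, ψ k i) := by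
  simp_rw [Finset.mul_sum, mul_sub, Finset.mul_sum, ← Finset.sum_sub_distrib]
  rw [Finset.sum_comm]
  exact Finset.sum_congr rfl fun k _ => Finset.sum_congr rfl fun i _ => by ring

theorem abs_sum_mul_sub_sum_le_of_orthonormal [DecidableEq κ] {ψ : κ → ι → ℝ}
    (horth : ∀ j k, ∑ i, ψ j i * ψ k i = if j = k then 1 else 0) (u : ι → ℝ) {f : ι → ℝ}
    {c : κ → ℝ} (hf : ∀ i, f i = ∑ k, c k * ψ k i) :
    |∑ i, u i * f i - ∑ i, f i|
      ≤ √(∑ k, (∑ i, u i * ψ k i - ∑ i, ψ k i) ^ 2) * √(∑ i, f i ^ 2) := by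
  simp only [hf, sum_sq_sum_mul_eq_sum_sq_of_orthonormal horth,
    sum_mul_sub_sum_eq_sum_mul_residual]
  rw [mul_comm]
  exact abs_sum_mul_le_sqrt_mul_sqrt _ _ _

end Orthonormal

theorem sqrt_le_sqrt_mul_mul_of_one_sub_mul_le {S m ε A : ℝ} (hS : 0 ≤ S) (hm : 1 ≤ m)
    (hε0 : 0 ≤ ε) (hε : ε * √m < 1) (hA : 0 ≤ A)
    (h : (1 - ε) * S ≤ A ^ 2 * (m + ε * √m)) :
    √S ≤ √m * (√(1 - ε * √m)⁻¹ * √(1 + ε / √m)) * A := by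
  have hsqrt_m : 1 ≤ √m := Real.one_le_sqrt.mpr hm
  have hpos : 0 < 1 - ε * √m := by linarith
  have hm_eq : m + ε * √m = m * (1 + ε / √m) := by
    field_simp
    linear_combination ε * Real.mul_self_sqrt (by linarith : 0 ≤ m)
  have hS_le : S ≤ m * ((1 - ε * √m)⁻¹ * (1 + ε / √m)) * A ^ 2 := by
    have h' : (1 - ε * √m) * S ≤ A ^ 2 * (m + ε * √m) :=
      (mul_le_mul_of_nonneg_right (by nlinarith) hS).trans h
    calc S ≤ A ^ 2 * (m + ε * √m) / (1 - ε * √m) := (le_div_iff₀ hpos).mpr (by linarith)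
      _ = _ := by rw [hm_eq]; ring
  calc √S ≤ √(m * ((1 - ε * √m)⁻¹ * (1 + ε / √m)) * A ^ 2) := Real.sqrt_le_sqrt hS_le
    _ = _ := by
      rw [Real.sqrt_mul (by positivity), Real.sqrt_mul (by linarith),
        Real.sqrt_mul (inv_nonneg.mpr hpos.le), Real.sqrt_sq hA]

theorem prop2_second_inequality_general
    (d n M N : ℕ) (x : Fin M → (Fin d → ℝ))
    (ψ : Fin N → (Fin M → ℝ))
    (horth : ∀ j k, ∑ i, ψ j i * ψ k i = if j = k then 1 else 0)
    (hspan : ∀ q : MvPolynomial (Fin d) ℝ, q.totalDegree ≤ 2 * n →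
      ∃ c : Fin N → ℝ, ∀ i, eval (x i) q = ∑ k, c k * ψ k i)
    (u : Fin M → ℝ) (hu : ∀ i, 0 ≤ u i) (ε : ℝ)
    (hres : Real.sqrt (∑ k, (∑ i, u i * ψ k i - ∑ i, ψ k i) ^ 2) = ε)
    (hε : ε * Real.sqrt M < 1) :
    ∀ p : MvPolynomial (Fin d) ℝ, p.totalDegree ≤ n →
      ∀ A : ℝ, 0 ≤ A → (∀ i, u i ≠ 0 → |eval (x i) p| ≤ A) →
        Real.sqrt (∑ i, (eval (x i) p) ^ 2)
          ≤ Real.sqrt M *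
              (Real.sqrt (1 - ε * Real.sqrt M)⁻¹ *
                Real.sqrt (1 + ε / Real.sqrt M)) * A := by
  intro p hp A hA hpA
  have hε0 : 0 ≤ ε := hres ▸ Real.sqrt_nonneg _
  have herr : ∀ q : MvPolynomial (Fin d) ℝ, q.totalDegree ≤ 2 * n →
      |∑ i, u i * eval (x i) q - ∑ i, eval (x i) q| ≤ ε * √(∑ i, eval (x i) q ^ 2) := by
    intro q hq
    obtain ⟨c, hc⟩ := hspan q hq
    rw [← hres]
    exact abs_sum_mul_sub_sum_le_of_orthonormal horth u hc
  rcases Nat.eq_zero_or_pos M with rfl | hM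
  · simp
  have hweights : ∑ i, u i ≤ M + ε * √M := by
    linarith [by simpa using (abs_le.mp (herr 1 (by simp))).2]
  have hlower : (1 - ε) * ∑ i, eval (x i) p ^ 2 ≤ ∑ i, u i * eval (x i) p ^ 2 := by
    have h := (abs_le.mp (herr (p ^ 2) ((totalDegree_pow p 2).trans (by omega)))).1
    simp only [map_pow] at h
    linarith [mul_le_mul_of_nonneg_left
      (sqrt_sum_sq_sq_le_sum_sq .univ fun i => eval (x i) p) hε0]
  refine sqrt_le_sqrt_mul_mul_of_one_sub_mul_le (by positivity) (by exact_mod_cast hM) hε0 hε hA ?_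
  calc (1 - ε) * ∑ i, eval (x i) p ^ 2 ≤ ∑ i, u i * eval (x i) p ^ 2 := hlower
    _ ≤ A ^ 2 * ∑ i, u i := sum_mul_sq_le_sq_mul_sum _ hu hpA
    _ ≤ A ^ 2 * (M + ε * √M) := by gcongr

/-- Proposition 2, second inequality: in the same near-exact setting with
`ε√M < 1`, `‖p‖_{ℓ²(X)} ≤ √M β_M(ε) max_{t∈T_{2n}}|p(t)|`, where
`β_M(ε) = (1−ε√M)^{-1/2}(1+ε/√M)^{1/2}` and the CATCH points `T_{2n}` are the
points of `X` carrying a nonzero weight `u_i`; the maximum is expressed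
through an arbitrary nonnegative upper bound `A` of `|p|` on `T_{2n}`. -/
theorem prop2_second_inequality
    (d n M N : ℕ) (x : Fin M → (Fin d → ℝ))
    (ψ : Fin N → (Fin M → ℝ))
    (hψpoly : ∀ k, ∃ q : MvPolynomial (Fin d) ℝ,
      q.totalDegree ≤ 2 * n ∧ ∀ i, ψ k i = eval (x i) q)
    (horth : ∀ j k, ∑ i, ψ j i * ψ k i = if j = k then 1 else 0)
    (hspan : ∀ q : MvPolynomial (Fin d) ℝ, q.totalDegree ≤ 2 * n →
      ∃ c : Fin N → ℝ, ∀ i, eval (x i) q = ∑ k, c k * ψ k i)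
    (u : Fin M → ℝ) (hu : ∀ i, 0 ≤ u i) (ε : ℝ)
    (hres : Real.sqrt (∑ k, (∑ i, u i * ψ k i - ∑ i, ψ k i) ^ 2) = ε)
    (hε : ε * Real.sqrt M < 1) :
    ∀ p : MvPolynomial (Fin d) ℝ, p.totalDegree ≤ n →
      ∀ A : ℝ, 0 ≤ A → (∀ i, u i ≠ 0 → |eval (x i) p| ≤ A) →
        Real.sqrt (∑ i, (eval (x i) p) ^ 2)
          ≤ Real.sqrt M *
              (Real.sqrt (1 - ε * Real.sqrt M)⁻¹ *
                Real.sqrt (1 + ε / Real.sqrt M)) * A :=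
  prop2_second_inequality_general d n M N x ψ horth hspan u hu ε hres hε
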